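/- arXiv:1704.02503 — 3 statements merged into one kernel-verified Lean document; each statement's English description precedes it below -/
import Mathlib

section
/- Let d ∈ ℕ. Let Q_0 be a Borel measure on ℝ^d with Q_0({0}) = 0 and ∫_{ℝ^d} min(1, ‖x‖²) dQ_0(x) < ∞. Let (μ_n)_{n∈ℕ} be Borel measures on ℝ^d × ℝ^d such that for every n and every Borel set A ⊆ ℝ^d, μ_n({(x,y) : x ∈ A, x ≠ 0}) = Q_0(A ∖ {0}) and μ_n({(x,y) : y ∈ A, y ≠ 0}) = Q_0(A ∖ {0}). Assume that for every δ > 0, lim_{n→∞} μ_n({(x,y) : ‖x‖·‖y‖ > δ}) = 0. Then lim_{n→∞} ∫_{{(x,y) : 0 < ‖x‖² + ‖y‖² ≤ 1}} ‖x‖·‖y‖ dμ_n(x,y) = 0. -/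
/-!
On the region `‖x‖² + ‖y‖² ≤ 1` we have `‖x‖‖y‖ ≤ 1`, and where `‖x‖‖y‖ ≤ δ` also
`‖x‖‖y‖ ≤ min(δ, ‖x‖²) + min(δ, ‖y‖²)`. Since both marginals of `μ_n` away from the origin
are `Q₀`, integrating gives
`∫ ‖x‖‖y‖ dμ_n ≤ μ_n{‖x‖‖y‖ > δ} + 2 ∫ min(δ, ‖y‖²) dQ₀`.
The first term tends to `0` as `n → ∞`, the second as `δ → 0` by dominated convergence
with dominating function `min(1, ‖y‖²)`.
-/

open MeasureTheory Filter Topology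
open scoped ENNReal

section

variable {α γ : Type*} [MeasurableSpace α] [Zero α] [MeasurableSpace γ]
  {μ : Measure γ} {ν : Measure α} {p : γ → α}

theorem MeasureTheory.Measure.map_restrict_eq_restrict_compl_zero (hp : Measurable p)
    (hμν : ∀ A, MeasurableSet A → μ {q | p q ∈ A ∧ p q ≠ 0} = ν (A \ {0})) :
    (μ.restrict {q | p q ≠ 0}).map p = ν.restrict {0}ᶜ := by
  ext A hA
  rw [Measure.map_apply hp hA, Measure.restrict_apply (hA.preimage hp),
    Measure.restrict_apply hA]
  exact hμν A hA

theorem lintegral_comp_eq_of_marginal [MeasurableSingletonClass α] (hp : Measurable p)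
    (hμν : ∀ A, MeasurableSet A → μ {q | p q ∈ A ∧ p q ≠ 0} = ν (A \ {0}))
    {F : α → ℝ≥0∞} (hF : Measurable F) (hF0 : F 0 = 0) :
    ∫⁻ q, F (p q) ∂μ = ∫⁻ y, F y ∂ν := by
  calc ∫⁻ q, F (p q) ∂μ = ∫⁻ q in {q | p q ≠ 0}, F (p q) ∂μ := by
        refine (setLIntegral_eq_of_support_subset fun q hq h => ?_).symm
        exact hq (by simp only [h, hF0])
    _ = ∫⁻ y in {0}ᶜ, F y ∂ν := by
        rw [← Measure.map_restrict_eq_restrict_compl_zero hp hμν, lintegral_map hF hp]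
    _ = ∫⁻ y, F y ∂ν := by
        refine setLIntegral_eq_of_support_subset fun y hy h => ?_
        exact hy (by simp only [Set.mem_singleton_iff.mp h, hF0])

end

theorem mul_le_min_sq_add_min_sq {a b δ : ℝ} (ha : 0 ≤ a) (hb : 0 ≤ b) (h : a * b ≤ δ) :
    a * b ≤ min δ (a ^ 2) + min δ (b ^ 2) := by
  have hδ : 0 ≤ δ := (mul_nonneg ha hb).trans h
  rcases le_total a b with hab | hba
  · have : a * b ≤ min δ (b ^ 2) := le_min h (by nlinarith)
    linarith [le_min hδ (sq_nonneg a)]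
  · have : a * b ≤ min δ (a ^ 2) := le_min h (by nlinarith)
    linarith [le_min hδ (sq_nonneg b)]

theorem ofReal_mul_le_of_sq_add_sq_le_one {a b : ℝ} (ha : 0 ≤ a) (hb : 0 ≤ b)
    (hab : a ^ 2 + b ^ 2 ≤ 1) (δ : ℝ) :
    ENNReal.ofReal (a * b) ≤ (if δ < a * b then 1 else 0)
      + ENNReal.ofReal (min δ (a ^ 2)) + ENNReal.ofReal (min δ (b ^ 2)) := by
  split_ifs with h
  · have : a * b ≤ 1 := by nlinarith [sq_nonneg (a - b)]
    calc ENNReal.ofReal (a * b) ≤ 1 := ENNReal.ofReal_le_one.mpr this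
      _ ≤ _ := le_add_right (le_add_right le_rfl)
  · have hδ : 0 ≤ δ := (mul_nonneg ha hb).trans (not_lt.mp h)
    rw [zero_add, ← ENNReal.ofReal_add (le_min hδ (sq_nonneg a)) (le_min hδ (sq_nonneg b))]
    exact ENNReal.ofReal_le_ofReal (mul_le_min_sq_add_min_sq ha hb (not_lt.mp h))

section

variable {E : Type*} [NormedAddCommGroup E] [MeasurableSpace E] [OpensMeasurableSpace E]

theorem tendsto_lintegral_min_sq_norm_nhdsGT_zero {Q : Measure E}
    (hQ : ∫⁻ x, ENNReal.ofReal (min 1 (‖x‖ ^ 2)) ∂Q < ∞) :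
    Tendsto (fun δ : ℝ => ∫⁻ x, ENNReal.ofReal (min δ (‖x‖ ^ 2)) ∂Q) (𝓝[>] 0) (𝓝 0) := by
  have hlim := tendsto_lintegral_filter_of_dominated_convergence (μ := Q) (l := 𝓝[>] (0 : ℝ))
    (F := fun δ x => ENNReal.ofReal (min δ (‖x‖ ^ 2))) (f := 0) _
    (Eventually.of_forall fun δ => by fun_prop)
    (mem_of_superset (Ioo_mem_nhdsGT one_pos) fun δ hδ => ae_of_all _ fun x =>
      ENNReal.ofReal_le_ofReal (min_le_min_right _ hδ.2.le)) hQ.ne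
    (ae_of_all _ fun x => ?_)
  · simpa using hlim
  · have : Continuous fun δ : ℝ => ENNReal.ofReal (min δ (‖x‖ ^ 2)) :=
      ENNReal.continuous_ofReal.comp (continuous_id.min continuous_const)
    simpa [sq_nonneg] using (this.tendsto 0).mono_left nhdsWithin_le_nhds

theorem setLIntegral_norm_mul_norm_le {μ : Measure (E × E)} {Q : Measure E}
    (h₁ : ∀ A, MeasurableSet A → μ {q | q.1 ∈ A ∧ q.1 ≠ 0} = Q (A \ {0}))
    (h₂ : ∀ A, MeasurableSet A → μ {q | q.2 ∈ A ∧ q.2 ≠ 0} = Q (A \ {0}))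
    {s : Set (E × E)} (hs : ∀ q ∈ s, ‖q.1‖ ^ 2 + ‖q.2‖ ^ 2 ≤ 1) (δ : ℝ) :
    ∫⁻ q in s, ENNReal.ofReal (‖q.1‖ * ‖q.2‖) ∂μ
      ≤ μ {q | δ < ‖q.1‖ * ‖q.2‖} + 2 * ∫⁻ x, ENNReal.ofReal (min δ (‖x‖ ^ 2)) ∂Q := by
  set F : E → ℝ≥0∞ := fun x => ENNReal.ofReal (min δ (‖x‖ ^ 2))
  set B := {q : E × E | δ < ‖q.1‖ * ‖q.2‖}
  have hF : Measurable F := by fun_prop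
  have hF0 : F 0 = 0 := ENNReal.ofReal_eq_zero.mpr (by simp)
  have hB : MeasurableSet B := measurableSet_lt measurable_const (by fun_prop)
  calc ∫⁻ q in s, ENNReal.ofReal (‖q.1‖ * ‖q.2‖) ∂μ
      ≤ ∫⁻ q in s, B.indicator 1 q + F q.1 + F q.2 ∂μ := by
        refine setLIntegral_mono (by fun_prop) fun q hq => ?_
        simpa [Set.indicator_apply, B, F] using
          ofReal_mul_le_of_sq_add_sq_le_one (norm_nonneg _) (norm_nonneg _) (hs q hq) δ
    _ ≤ ∫⁻ q, B.indicator 1 q + F q.1 + F q.2 ∂μ := setLIntegral_le_lintegral _ _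
    _ = μ B + 2 * ∫⁻ x, F x ∂Q := by
        rw [lintegral_add_right _ (by fun_prop), lintegral_add_right _ (by fun_prop),
          lintegral_indicator_one hB, lintegral_comp_eq_of_marginal measurable_fst h₁ hF hF0,
          lintegral_comp_eq_of_marginal measurable_snd h₂ hF hF0, add_assoc, two_mul]

end

theorem ENNReal.tendsto_nhds_zero_of_le_add {ι : Type*} {l : Filter ι} {a : ι → ℝ≥0∞}
    {b : ℝ → ι → ℝ≥0∞} {c : ℝ → ℝ≥0∞} (hb : ∀ δ, 0 < δ → Tendsto (b δ) l (𝓝 0))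
    (hc : Tendsto c (𝓝[>] 0) (𝓝 0)) (hab : ∀ δ, 0 < δ → ∀ i, a i ≤ b δ i + c δ) :
    Tendsto a l (𝓝 0) := by
  rw [ENNReal.tendsto_nhds_zero]
  intro ε hε
  have hε₂ : 0 < ε / 2 := ENNReal.half_pos hε.ne'
  obtain ⟨δ, hcδ, hδ⟩ :=
    ((ENNReal.tendsto_nhds_zero.mp hc _ hε₂).and self_mem_nhdsWithin).exists
  filter_upwards [ENNReal.tendsto_nhds_zero.mp (hb δ hδ) _ hε₂] with i hi
  calc a i ≤ b δ i + c δ := hab δ hδ i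
    _ ≤ ε / 2 + ε / 2 := add_le_add hi hcδ
    _ = ε := ENNReal.add_halves ε

theorem stmt_3_general {d : ℕ}
    (Q₀ : Measure (EuclideanSpace ℝ (Fin d)))
    (hQint : ∫⁻ x, ENNReal.ofReal (min 1 (‖x‖ ^ 2)) ∂Q₀ < ∞)
    (μ : ℕ → Measure (EuclideanSpace ℝ (Fin d) × EuclideanSpace ℝ (Fin d)))
    (hmarg1 : ∀ (n : ℕ) (A : Set (EuclideanSpace ℝ (Fin d))), MeasurableSet A →
      μ n {q | q.1 ∈ A ∧ q.1 ≠ 0} = Q₀ (A \ {0}))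
    (hmarg2 : ∀ (n : ℕ) (A : Set (EuclideanSpace ℝ (Fin d))), MeasurableSet A →
      μ n {q | q.2 ∈ A ∧ q.2 ≠ 0} = Q₀ (A \ {0}))
    (hsmall : ∀ δ : ℝ, 0 < δ →
      Tendsto (fun n => μ n {q | δ < ‖q.1‖ * ‖q.2‖}) atTop (nhds 0)) :
    Tendsto (fun n =>
        ∫⁻ q in {q : EuclideanSpace ℝ (Fin d) × EuclideanSpace ℝ (Fin d) |
            0 < ‖q.1‖ ^ 2 + ‖q.2‖ ^ 2 ∧ ‖q.1‖ ^ 2 + ‖q.2‖ ^ 2 ≤ 1},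
          ENNReal.ofReal (‖q.1‖ * ‖q.2‖) ∂(μ n))
      atTop (nhds 0) := by
  have hc := ENNReal.Tendsto.const_mul (a := 2)
    (tendsto_lintegral_min_sq_norm_nhdsGT_zero hQint) (Or.inr ENNReal.ofNat_ne_top)
  rw [mul_zero] at hc
  exact ENNReal.tendsto_nhds_zero_of_le_add hsmall hc fun δ _ n =>
    setLIntegral_norm_mul_norm_le (hmarg1 n) (hmarg2 n) (fun _ hq => hq.2) δ

/-- Let `Q₀` be a Lévy-type measure on `ℝ^d` (no mass at `0` and
`∫ min(1,‖x‖²) dQ₀ < ∞`) and let `μ_n` be measures on `ℝ^d × ℝ^d` whose two coordinate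
marginals, away from the origin, both equal `Q₀`.  If `μ_n({‖x‖·‖y‖ > δ}) → 0` for every
`δ > 0`, then `∫_{0 < ‖x‖² + ‖y‖² ≤ 1} ‖x‖·‖y‖ dμ_n → 0`. -/
theorem stmt_3 {d : ℕ}
    (Q₀ : Measure (EuclideanSpace ℝ (Fin d)))
    (hQ0 : Q₀ {0} = 0)
    (hQint : ∫⁻ x, ENNReal.ofReal (min 1 (‖x‖ ^ 2)) ∂Q₀ < ∞)
    (μ : ℕ → Measure (EuclideanSpace ℝ (Fin d) × EuclideanSpace ℝ (Fin d)))
    (hmarg1 : ∀ (n : ℕ) (A : Set (EuclideanSpace ℝ (Fin d))), MeasurableSet A →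
      μ n {q | q.1 ∈ A ∧ q.1 ≠ 0} = Q₀ (A \ {0}))
    (hmarg2 : ∀ (n : ℕ) (A : Set (EuclideanSpace ℝ (Fin d))), MeasurableSet A →
      μ n {q | q.2 ∈ A ∧ q.2 ≠ 0} = Q₀ (A \ {0}))
    (hsmall : ∀ δ : ℝ, 0 < δ →
      Tendsto (fun n => μ n {q | δ < ‖q.1‖ * ‖q.2‖}) atTop (nhds 0)) :
    Tendsto (fun n =>
        ∫⁻ q in {q : EuclideanSpace ℝ (Fin d) × EuclideanSpace ℝ (Fin d) |
            0 < ‖q.1‖ ^ 2 + ‖q.2‖ ^ 2 ∧ ‖q.1‖ ^ 2 + ‖q.2‖ ^ 2 ≤ 1},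
          ENNReal.ofReal (‖q.1‖ * ‖q.2‖) ∂(μ n))
      atTop (nhds 0) :=
  stmt_3_general Q₀ hQint μ hmarg1 hmarg2 hsmall
end

section
/- Let (S, 𝒮, μ) be a σ-finite measure space, let l ∈ ℕ, and let g : S × ℝ^l → ℝ be square-integrable with respect to the product of μ and l-dimensional Lebesgue measure. Then for every sequence (t_n)_{n∈ℕ} ⊆ ℝ^l with ‖t_n‖_∞ → ∞, lim_{n→∞} ∫_S ∫_{ℝ^l} |g(a, s) · g(a, s − t_n)| ds dμ(a) = 0. -/
open MeasureTheory Filter Set Topology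
open scoped ENNReal

/-!
Write `T_v (a, s) = (a, s - v)`, a measure-preserving map of `μ ⊗ Leb`, and split `|g|` into its
part over `A_R = {‖s‖ ≤ R}` and the tail `r_R` over the complement. When `‖v‖ > 2R` the map `T_v`
sends `A_R` outside `A_R`, so the product `|g| · |g ∘ T_v|` is pointwise dominated by
`|g| · r_R ∘ T_v + r_R · |g ∘ T_v|`, whose integral is at most `2 ‖g‖₂ ‖r_R‖₂` by Cauchy–Schwarz.
The tail `‖r_R‖₂` tends to `0` as `R → ∞` by dominated convergence.
-/

theorem MeasureTheory.MemLp.tendsto_eLpNorm_indicator_compl {α F ι : Type*} [MeasurableSpace α]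
    {μ : Measure α} [NormedAddCommGroup F] {p : ℝ≥0∞} {g : α → F} {l : Filter ι}
    [l.IsCountablyGenerated] {A : ι → Set α} (hp : p ≠ ∞) (hg : MemLp g p μ)
    (hA : ∀ i, MeasurableSet (A i)) (hcover : ∀ x, ∀ᶠ i in l, x ∈ A i) :
    Tendsto (fun i => eLpNorm ((A i)ᶜ.indicator g) p μ) l (𝓝 0) := by
  rcases eq_or_ne p 0 with rfl | hp0
  · simpa using tendsto_const_nhds
  have hpos : 0 < p.toReal := ENNReal.toReal_pos hp0 hp
  have hlint : Tendsto (fun i => ∫⁻ x, ‖(A i)ᶜ.indicator g x‖ₑ ^ p.toReal ∂μ) l (𝓝 0) := by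
    simpa using tendsto_lintegral_filter_of_dominated_convergence' (f := 0)
      (fun x => ‖g x‖ₑ ^ p.toReal)
      (.of_forall fun i => ((hg.1.indicator (hA i).compl).enorm.pow_const _))
      (.of_forall fun i => .of_forall fun x => by
        gcongr
        exact enorm_indicator_le_enorm_self _ _)
      (lintegral_rpow_enorm_lt_top_of_eLpNorm_lt_top hp0 hp hg.2).ne
      (.of_forall fun x => tendsto_const_nhds.congr' <| (hcover x).mono fun i hi => by
        simp [hi, ENNReal.zero_rpow_of_pos hpos])
  simp_rw [eLpNorm_eq_lintegral_rpow_enorm_toReal hp0 hp]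
  simpa [Function.comp_def, ENNReal.zero_rpow_of_pos (inv_pos.2 hpos)] using
    (ENNReal.continuous_rpow_const (y := 1 / p.toReal)).tendsto 0 |>.comp hlint

theorem norm_mul_comp_le_of_mapsTo_compl {α 𝕜 : Type*} [NormedRing 𝕜] (g : α → 𝕜) {T : α → α}
    {A : Set α} (hAT : MapsTo T A Aᶜ) (x : α) :
    ‖g x * g (T x)‖ ≤ ‖g x * Aᶜ.indicator g (T x)‖ + ‖Aᶜ.indicator g x * g (T x)‖ := by
  by_cases hx : x ∈ A
  · rw [indicator_of_mem (hAT hx)]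
    exact le_add_of_nonneg_right (norm_nonneg _)
  · rw [indicator_of_mem (show x ∈ Aᶜ from hx)]
    exact le_add_of_nonneg_left (norm_nonneg _)

section Decorrelation

variable {α 𝕜 : Type*} [MeasurableSpace α] {μ : Measure α} [NormedRing 𝕜]

theorem eLpNorm_mul_le_mul_eLpNorm_two {f g : α → 𝕜} (hf : AEStronglyMeasurable f μ)
    (hg : AEStronglyMeasurable g μ) :
    eLpNorm (fun x => f x * g x) 1 μ ≤ eLpNorm f 2 μ * eLpNorm g 2 μ :=
  eLpNorm_smul_le_mul_eLpNorm (𝕜 := 𝕜) (E := 𝕜) (r := 1) hg hf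

theorem eLpNorm_mul_comp_le_of_mapsTo_compl {g : α → 𝕜} {T : α → α} {A : Set α}
    (hg : AEStronglyMeasurable g μ) (hT : MeasurePreserving T μ μ) (hA : MeasurableSet A)
    (hAT : MapsTo T A Aᶜ) :
    eLpNorm (fun x => g x * g (T x)) 1 μ ≤ 2 * eLpNorm g 2 μ * eLpNorm (Aᶜ.indicator g) 2 μ := by
  set r := Aᶜ.indicator g
  have hr : AEStronglyMeasurable r μ := hg.indicator hA.compl
  have hgT : AEStronglyMeasurable (g ∘ T) μ := hg.comp_measurePreserving hT
  have hrT : AEStronglyMeasurable (r ∘ T) μ := hr.comp_measurePreserving hT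
  calc eLpNorm (fun x => g x * g (T x)) 1 μ
      ≤ eLpNorm (fun x => ‖g x * r (T x)‖ + ‖r x * g (T x)‖) 1 μ :=
        eLpNorm_mono_real (norm_mul_comp_le_of_mapsTo_compl g hAT)
    _ ≤ eLpNorm (fun x => g x * r (T x)) 1 μ + eLpNorm (fun x => r x * g (T x)) 1 μ :=
        (eLpNorm_add_le (f := fun x => ‖g x * r (T x)‖) (g := fun x => ‖r x * g (T x)‖)
          (hg.mul hrT).norm (hr.mul hgT).norm le_rfl).trans_eq (by simp only [eLpNorm_norm])
    _ ≤ eLpNorm g 2 μ * eLpNorm (r ∘ T) 2 μ + eLpNorm r 2 μ * eLpNorm (g ∘ T) 2 μ :=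
        add_le_add (eLpNorm_mul_le_mul_eLpNorm_two hg hrT)
          (eLpNorm_mul_le_mul_eLpNorm_two hr hgT)
    _ = 2 * eLpNorm g 2 μ * eLpNorm r 2 μ := by
        rw [eLpNorm_comp_measurePreserving hr hT, eLpNorm_comp_measurePreserving hg hT]
        ring

end Decorrelation

section Shift

variable {S E : Type*} [NormedAddCommGroup E]

theorem mapsTo_sub_const_norm_snd_le_compl {R : ℝ} {v : E} (hv : 2 * R < ‖v‖) :
    MapsTo (fun p : S × E => (p.1, p.2 - v)) {p | ‖p.2‖ ≤ R} {p | ‖p.2‖ ≤ R}ᶜ := by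
  intro p (hp : ‖p.2‖ ≤ R) (hpv : ‖p.2 - v‖ ≤ R)
  have : ‖v‖ ≤ ‖p.2‖ + ‖p.2 - v‖ := by simpa using norm_sub_le p.2 (p.2 - v)
  linarith

variable [MeasurableSpace S] [MeasurableSpace E] [MeasurableAdd E] {μ : Measure S} [SFinite μ]
  {ν : Measure E} [SFinite ν] [ν.IsAddRightInvariant]

theorem measurePreserving_prodMap_id_sub_const (v : E) :
    MeasurePreserving (fun p : S × E => (p.1, p.2 - v)) (μ.prod ν) (μ.prod ν) :=
  (MeasurePreserving.id μ).prod (measurePreserving_sub_right ν v)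

theorem integral_integral_abs_mul_sub_eq_eLpNorm {g : S × E → ℝ} (hg : MemLp g 2 (μ.prod ν))
    (v : E) :
    ∫ a, ∫ s, |g (a, s) * g (a, s - v)| ∂ν ∂μ
      = (eLpNorm (fun p => g p * g (p.1, p.2 - v)) 1 (μ.prod ν)).toReal := by
  have hmem : MemLp (fun p => g p * g (p.1, p.2 - v)) 1 (μ.prod ν) :=
    (hg.comp_measurePreserving (measurePreserving_prodMap_id_sub_const v)).mul' hg
  rw [← integral_prod (fun p => |g p * g (p.1, p.2 - v)|) (memLp_one_iff_integrable.1 hmem).abs]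
  simp_rw [← Real.norm_eq_abs]
  rw [integral_norm_eq_lintegral_enorm hmem.1, eLpNorm_one_eq_lintegral_enorm]

theorem tendsto_integral_integral_abs_mul_sub [OpensMeasurableSpace E] {ι : Type*}
    {l : Filter ι} {g : S × E → ℝ} (hg : MemLp g 2 (μ.prod ν)) {t : ι → E}
    (ht : Tendsto (fun n => ‖t n‖) l atTop) :
    Tendsto (fun n => ∫ a, ∫ s, |g (a, s) * g (a, s - t n)| ∂ν ∂μ) l (𝓝 0) := by
  simp_rw [integral_integral_abs_mul_sub_eq_eLpNorm hg]
  refine (ENNReal.tendsto_toReal ENNReal.zero_ne_top).comp ?_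
  have hA (R : ℝ) : MeasurableSet {p : S × E | ‖p.2‖ ≤ R} :=
    measurableSet_le measurable_snd.norm measurable_const
  have htail : Tendsto (fun R : ℝ =>
      2 * eLpNorm g 2 (μ.prod ν) * eLpNorm ({p : S × E | ‖p.2‖ ≤ R}ᶜ.indicator g) 2 (μ.prod ν))
      atTop (𝓝 0) := by
    simpa using ENNReal.Tendsto.const_mul
      (hg.tendsto_eLpNorm_indicator_compl ENNReal.ofNat_ne_top hA
        (fun p => eventually_ge_atTop ‖p.2‖))
      (Or.inr (by finiteness))
  rw [ENNReal.tendsto_nhds_zero]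
  intro ε hε
  obtain ⟨R, hR⟩ := (ENNReal.tendsto_nhds_zero.1 htail ε hε).exists
  filter_upwards [ht.eventually_gt_atTop (2 * R)] with n hn
  exact (eLpNorm_mul_comp_le_of_mapsTo_compl hg.1 (measurePreserving_prodMap_id_sub_const _)
    (hA R) (mapsTo_sub_const_norm_snd_le_compl hn)).trans hR

end Shift

/-- If `(S, μ)` is σ-finite and `g : S × ℝ^l → ℝ` is square-integrable
with respect to `μ ⊗ Leb`, then along any sequence `t_n` with `‖t_n‖_∞ → ∞` the
"decorrelation" integrals `∫_S ∫_{ℝ^l} |g(a,s) g(a,s-t_n)| ds μ(da)` tend to `0`. -/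
theorem stmt_5 {S : Type*} [MeasurableSpace S] (μ : Measure S) [SigmaFinite μ] (l : ℕ)
    (g : S × (Fin l → ℝ) → ℝ) (hg : MemLp g 2 (μ.prod volume)) :
    ∀ t : ℕ → (Fin l → ℝ), Tendsto (fun n => ‖t n‖) atTop atTop →
      Tendsto (fun n => ∫ a, ∫ s, |g (a, s) * g (a, s - t n)| ∂volume ∂μ)
        atTop (nhds 0) :=
  fun _ ht => tendsto_integral_integral_abs_mul_sub hg ht
end

section
/- Let (Z_t)_{t∈ℝ^l} be a real-valued strictly stationary random field on a probability space (Ω, ℱ, P). Suppose that for every sequence (t_n)_{n∈ℕ} ⊆ ℝ^l with ‖t_n‖_∞ → ∞, lim_{n→∞} E[e^{i(Z_{t_n} − Z_0)}] = E[e^{iZ_0}] · E[e^{−iZ_0}]. Then for every complex-valued Y ∈ L²(Ω, ℱ, P) and every sequence (t_n) ⊆ ℝ^l with ‖t_n‖_∞ → ∞, lim_{n→∞} E[e^{iZ_{t_n}} · conj(Y)] = E[e^{iZ_0}] · E[conj(Y)]. -/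
/-!
In `L²(P)` put `b_s = e^{iZ_s} - E[e^{iZ_0}] • 1`. By stationarity
`⟪b_r, b_s⟫ = E[e^{i(Z_{s-r} - Z_0)}] - |E[e^{iZ_0}]|²`, so the hypothesis says exactly that
`⟪b_{t_m}, b_{t_n}⟫ → 0` as `n → ∞`, for each fixed `m`. A bounded sequence with this property
tends weakly to `0`: the vectors `y` with `⟪b_{t_n}, y⟫ → 0` form a closed subspace which contains
every `b_{t_m}`, hence also its own orthogonal complement, so it is the whole space.
Testing against `Y` gives the claim.
-/

open MeasureTheory Filter
open scoped Topology ComplexConjugate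

noncomputable section

def IsStationaryRealField {Ω : Type*} [MeasurableSpace Ω] {l : ℕ} (P : Measure Ω)
    (Z : (Fin l → ℝ) → Ω → ℝ) : Prop :=
  ∀ (h : Fin l → ℝ) (m : ℕ) (t : Fin m → (Fin l → ℝ)),
    P.map (fun ω (j : Fin m) => Z (t j + h) ω) = P.map (fun ω (j : Fin m) => Z (t j) ω)

theorem tendsto_inner_zero_of_forall_tendsto_inner_zero {𝕜 E ι : Type*} [RCLike 𝕜]
    [NormedAddCommGroup E] [InnerProductSpace 𝕜 E] [CompleteSpace E] {l : Filter ι}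
    {b : ι → E} {C : ℝ} (hC : ∀ i, ‖b i‖ ≤ C)
    (hb : ∀ m, Tendsto (fun i => inner 𝕜 (b m) (b i)) l (𝓝 0)) (y : E) :
    Tendsto (fun i => inner 𝕜 y (b i)) l (𝓝 0) := by
  have swap : ∀ u v : ι → E, Tendsto (fun i => inner 𝕜 (u i) (v i)) l (𝓝 0) →
      Tendsto (fun i => inner 𝕜 (v i) (u i)) l (𝓝 0) := fun u v h => by
    simpa only [← starRingEnd_apply, inner_conj_symm, map_zero] using h.star
  let W : Submodule 𝕜 E :=
    { carrier := {y | Tendsto (fun i => inner 𝕜 (b i) y) l (𝓝 0)}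
      add_mem' := fun hx hy => by simpa [inner_add_right] using hx.add hy
      zero_mem' := by simpa using tendsto_const_nhds
      smul_mem' := fun c x hx => by simpa [inner_smul_right] using hx.const_mul c }
  have hW : IsClosed (W : Set E) := by
    have hbdd : ∃ C, ∀ i, ‖innerSL 𝕜 (b i)‖ ≤ C :=
      ⟨C, fun i => (innerSL_apply_norm 𝕜 (b i)).trans_le (hC i)⟩
    have hequi := (NormedSpace.equicontinuous_TFAE fun i => innerSL 𝕜 (b i)).out 5 1
    exact (hequi.mp hbdd).isClosed_setOfPred_tendsto continuous_const
  have hWperp : Wᗮ = ⊥ := by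
    refine (Submodule.eq_bot_iff _).2 fun z hz => ?_
    have hbz : ∀ i, inner 𝕜 (b i) z = 0 := fun i => hz (b i) (swap (fun _ => b i) b (hb i))
    have hzW : z ∈ W := by simpa [W, hbz] using tendsto_const_nhds
    exact inner_self_eq_zero.1 (hz z hzW)
  have hy : y ∈ W := by
    rw [← hW.submodule_topologicalClosure_eq, Submodule.topologicalClosure_eq_top_iff.2 hWperp]
    trivial
  exact swap b (fun _ => y) hy

theorem MemLp.inner_toLp_toLp {α 𝕜 : Type*} [MeasurableSpace α] [RCLike 𝕜] {μ : Measure α}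
    {f g : α → 𝕜} (hf : MemLp f 2 μ) (hg : MemLp g 2 μ) :
    inner 𝕜 (hf.toLp f) (hg.toLp g) = ∫ a, conj (f a) * g a ∂μ := by
  refine integral_congr_ae ?_
  filter_upwards [hf.coeFn_toLp, hg.coeFn_toLp] with a hfa hga
  rw [hfa, hga, RCLike.inner_apply']

theorem Lp.inner_const_one_toLp {α 𝕜 : Type*} [MeasurableSpace α] [RCLike 𝕜] {μ : Measure α}
    [IsFiniteMeasure μ] {f : α → 𝕜} (hf : MemLp f 2 μ) :
    inner 𝕜 (Lp.const 2 μ (1 : 𝕜)) (hf.toLp f) = ∫ a, f a ∂μ := by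
  simp [← MemLp.toLp_const, MemLp.inner_toLp_toLp]

section ExpIMul

variable {Ω : Type*} [MeasurableSpace Ω] {P : Measure Ω}

theorem memLp_exp_I_mul_ofReal [IsFiniteMeasure P] {X : Ω → ℝ} (hX : Measurable X)
    (p : ENNReal) : MemLp (fun ω => Complex.exp (Complex.I * X ω)) p P :=
  MemLp.of_bound (by fun_prop) 1 (ae_of_all _ fun ω => (Complex.norm_exp_I_mul_ofReal _).le)

theorem norm_toLp_exp_I_mul_ofReal_le [IsProbabilityMeasure P] {X : Ω → ℝ} (hX : Measurable X) :
    ‖(memLp_exp_I_mul_ofReal (P := P) hX 2).toLp _‖ ≤ 1 := by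
  refine (Lp.norm_le_of_ae_bound zero_le_one ?_).trans (by simp [measureUnivNNReal])
  filter_upwards [(memLp_exp_I_mul_ofReal (P := P) hX 2).coeFn_toLp] with ω hω
  rw [hω, Complex.norm_exp_I_mul_ofReal]

theorem norm_integral_exp_I_mul_ofReal_le [IsProbabilityMeasure P] (X : Ω → ℝ) :
    ‖∫ ω, Complex.exp (Complex.I * X ω) ∂P‖ ≤ 1 := by
  simpa using norm_integral_le_of_norm_le_const (μ := P)
    (ae_of_all _ fun ω => (Complex.norm_exp_I_mul_ofReal (X ω)).le)

theorem integral_exp_neg_I_mul_ofReal (X : Ω → ℝ) :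
    ∫ ω, Complex.exp (-Complex.I * X ω) ∂P = conj (∫ ω, Complex.exp (Complex.I * X ω) ∂P) := by
  rw [← integral_conj]
  simp only [← Complex.exp_conj, map_mul, Complex.conj_I, Complex.conj_ofReal]

end ExpIMul

section StationaryField

variable {Ω : Type*} [MeasurableSpace Ω] {l : ℕ} {Z : (Fin l → ℝ) → Ω → ℝ}

theorem IsStationaryRealField.integral_comp_shift {E : Type*} [NormedAddCommGroup E]
    [NormedSpace ℝ E] {P : Measure Ω} (hstat : IsStationaryRealField P Z)
    (hmeas : ∀ t, Measurable (Z t)) {f : ℝ → ℝ → E} (hf : Continuous (Function.uncurry f))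
    (s r h : Fin l → ℝ) :
    ∫ ω, f (Z (s + h) ω) (Z (r + h) ω) ∂P = ∫ ω, f (Z s ω) (Z r ω) ∂P := by
  have hg : Continuous fun v : Fin 2 → ℝ => f (v 0) (v 1) :=
    hf.comp (f := fun v : Fin 2 → ℝ => (v 0, v 1)) (by fun_prop)
  have hlaw := congrArg (fun μ => ∫ v, f (v 0) (v 1) ∂μ) (hstat h 2 ![s, r])
  rw [integral_map (by fun_prop) hg.aestronglyMeasurable,
    integral_map (by fun_prop) hg.aestronglyMeasurable] at hlaw
  simpa using hlaw

theorem IsStationaryRealField.integral_exp_I_mul {P : Measure Ω}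
    (hstat : IsStationaryRealField P Z) (hmeas : ∀ t, Measurable (Z t)) (s : Fin l → ℝ) :
    ∫ ω, Complex.exp (Complex.I * Z s ω) ∂P = ∫ ω, Complex.exp (Complex.I * Z 0 ω) ∂P := by
  simpa using hstat.integral_comp_shift hmeas
    (f := fun x _ => Complex.exp (Complex.I * x)) (by fun_prop) 0 0 s

theorem IsStationaryRealField.integral_exp_I_mul_sub {P : Measure Ω}
    (hstat : IsStationaryRealField P Z) (hmeas : ∀ t, Measurable (Z t)) (s r : Fin l → ℝ) :
    ∫ ω, Complex.exp (Complex.I * ((Z s ω - Z r ω : ℝ) : ℂ)) ∂P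
      = ∫ ω, Complex.exp (Complex.I * ((Z (s - r) ω - Z 0 ω : ℝ) : ℂ)) ∂P := by
  simpa using hstat.integral_comp_shift hmeas
    (f := fun x y => Complex.exp (Complex.I * ((x - y : ℝ) : ℂ))) (by fun_prop) (s - r) 0 r

variable (P : Measure Ω) [IsProbabilityMeasure P]

def centeredExpL2 (hmeas : ∀ t, Measurable (Z t)) (s : Fin l → ℝ) : Lp ℂ 2 P :=
  (memLp_exp_I_mul_ofReal (hmeas s) 2).toLp _ -
    (∫ ω, Complex.exp (Complex.I * Z 0 ω) ∂P) • Lp.const 2 P 1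

theorem norm_centeredExpL2_le (hmeas : ∀ t, Measurable (Z t)) (s : Fin l → ℝ) :
    ‖centeredExpL2 P hmeas s‖ ≤ 2 := by
  have hone : ‖Lp.const 2 P (1 : ℂ)‖ = 1 := by simp [Lp.norm_const]
  calc ‖centeredExpL2 P hmeas s‖
      ≤ ‖(memLp_exp_I_mul_ofReal (P := P) (hmeas s) 2).toLp _‖
        + ‖∫ ω, Complex.exp (Complex.I * Z 0 ω) ∂P‖ * ‖Lp.const 2 P (1 : ℂ)‖ := by
        rw [← norm_smul]
        exact norm_sub_le _ _
    _ ≤ 1 + 1 * 1 := by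
        rw [hone]
        gcongr
        exacts [norm_toLp_exp_I_mul_ofReal_le (hmeas s), norm_integral_exp_I_mul_ofReal_le _]
    _ = 2 := by norm_num

theorem IsStationaryRealField.inner_centeredExpL2 (hstat : IsStationaryRealField P Z)
    (hmeas : ∀ t, Measurable (Z t)) (r s : Fin l → ℝ) :
    inner ℂ (centeredExpL2 P hmeas r) (centeredExpL2 P hmeas s)
      = ∫ ω, Complex.exp (Complex.I * ((Z (s - r) ω - Z 0 ω : ℝ) : ℂ)) ∂P
        - (∫ ω, Complex.exp (Complex.I * Z 0 ω) ∂P) *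
          conj (∫ ω, Complex.exp (Complex.I * Z 0 ω) ∂P) := by
  set c := ∫ ω, Complex.exp (Complex.I * Z 0 ω) ∂P
  let e s := (memLp_exp_I_mul_ofReal (P := P) (hmeas s) 2).toLp _
  have hone_e : ∀ s, inner ℂ (Lp.const 2 P 1) (e s) = c := fun s => by
    rw [Lp.inner_const_one_toLp, hstat.integral_exp_I_mul hmeas]
  have he_one : inner ℂ (e r) (Lp.const 2 P 1) = conj c := by
    rw [← inner_conj_symm, hone_e]
  have hone_one : inner ℂ (Lp.const 2 P (1 : ℂ)) (Lp.const 2 P 1) = 1 := by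
    simpa using Lp.inner_const_one_toLp (memLp_const (1 : ℂ) (μ := P))
  have he_e : inner ℂ (e r) (e s)
      = ∫ ω, Complex.exp (Complex.I * ((Z (s - r) ω - Z 0 ω : ℝ) : ℂ)) ∂P := by
    rw [MemLp.inner_toLp_toLp, ← hstat.integral_exp_I_mul_sub hmeas s r]
    congr with ω
    rw [← Complex.exp_conj, ← Complex.exp_add]
    simp only [map_mul, Complex.conj_I, Complex.conj_ofReal, Complex.ofReal_sub]
    ring_nf
  simp only [centeredExpL2, inner_sub_left, inner_sub_right, inner_smul_left, inner_smul_right]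
  rw [he_e, he_one, hone_e, hone_one]
  ring

theorem inner_toLp_centeredExpL2 (hmeas : ∀ t, Measurable (Z t)) {Y : Ω → ℂ}
    (hY : MemLp Y 2 P) (s : Fin l → ℝ) :
    inner ℂ (hY.toLp Y) (centeredExpL2 P hmeas s)
      = ∫ ω, Complex.exp (Complex.I * Z s ω) * conj (Y ω) ∂P
        - (∫ ω, Complex.exp (Complex.I * Z 0 ω) ∂P) * ∫ ω, conj (Y ω) ∂P := by
  simp only [centeredExpL2, inner_sub_right, inner_smul_right, ← MemLp.toLp_const,
    MemLp.inner_toLp_toLp, one_mul, mul_comm (conj (Y _))]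

end StationaryField

/-- If a strictly stationary real random field `Z` satisfies
`E[e^{i(Z_{t_n} - Z_0)}] → E[e^{iZ_0}] E[e^{-iZ_0}]` along all sequences with
`‖t_n‖_∞ → ∞`, then for every complex `Y ∈ L²(P)` one has
`E[e^{iZ_{t_n}} conj(Y)] → E[e^{iZ_0}] E[conj(Y)]` along all such sequences. -/
theorem stmt_9 {Ω : Type*} [MeasurableSpace Ω] {l : ℕ} (P : Measure Ω)
    [IsProbabilityMeasure P] (Z : (Fin l → ℝ) → Ω → ℝ)
    (hmeas : ∀ t, Measurable (Z t))
    (hstat : IsStationaryRealField P Z)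
    (hchar : ∀ t : ℕ → (Fin l → ℝ), Tendsto (fun n => ‖t n‖) atTop atTop →
      Tendsto (fun n => ∫ ω, Complex.exp (Complex.I * ((Z (t n) ω - Z 0 ω : ℝ) : ℂ)) ∂P)
        atTop (nhds ((∫ ω, Complex.exp (Complex.I * ((Z 0 ω : ℝ) : ℂ)) ∂P) *
          (∫ ω, Complex.exp (-Complex.I * ((Z 0 ω : ℝ) : ℂ)) ∂P)))) :
    ∀ Y : Ω → ℂ, MemLp Y 2 P →
      ∀ t : ℕ → (Fin l → ℝ), Tendsto (fun n => ‖t n‖) atTop atTop →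
        Tendsto (fun n =>
            ∫ ω, Complex.exp (Complex.I * ((Z (t n) ω : ℝ) : ℂ)) * (starRingEnd ℂ) (Y ω) ∂P)
          atTop (nhds ((∫ ω, Complex.exp (Complex.I * ((Z 0 ω : ℝ) : ℂ)) ∂P) *
            (∫ ω, (starRingEnd ℂ) (Y ω) ∂P))) := by
  intro Y hY t ht
  set c := ∫ ω, Complex.exp (Complex.I * Z 0 ω) ∂P with hc
  have hnull : ∀ m, Tendsto (fun n => inner ℂ (centeredExpL2 P hmeas (t m))
      (centeredExpL2 P hmeas (t n))) atTop (𝓝 0) := fun m => by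
    have hfar : Tendsto (fun n => ‖t n - t m‖) atTop atTop :=
      tendsto_atTop_mono (fun n => norm_sub_norm_le _ _) (tendsto_atTop_add_const_right _ _ ht)
    have hlim := (hchar _ hfar).sub_const (c * conj c)
    rw [integral_exp_neg_I_mul_ofReal, sub_self] at hlim
    simpa only [hstat.inner_centeredExpL2] using hlim
  have hweak := tendsto_inner_zero_of_forall_tendsto_inner_zero
    (norm_centeredExpL2_le P hmeas <| t ·) hnull (hY.toLp Y)
  simpa only [inner_toLp_centeredExpL2, ← hc, sub_add_cancel, zero_add] using
    hweak.add_const (c * ∫ ω, conj (Y ω) ∂P)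

end
end
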